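/- Let G be a connected graph. For every covering of G by k forests (subgraphs without cycles), there exists a covering of G by k trees (connected acyclic subgraphs). -/

import Mathlib

/-- An abstract simplicial complex on a vertex type `V`:
a downward-closed family of nonempty finite sets of vertices. -/
structure AbsSC (V : Type) where
  faces : Set (Finset V)
  nonempty_of_mem : ∀ σ ∈ faces, σ.Nonempty
  down_closed : ∀ σ ∈ faces, ∀ τ : Finset V, τ ⊆ σ → τ.Nonempty → τ ∈ faces

namespace AbsSC

variable {V W V' W' : Type} [DecidableEq V] [DecidableEq W]

/-- `f` is a simplicial map from `K` to `L`. -/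
def IsSimplicial (K : AbsSC V) (L : AbsSC W) (f : V → W) : Prop :=
  ∀ σ ∈ K.faces, σ.image f ∈ L.faces

/-- Two simplicial maps are contiguous. -/
def Contig (K : AbsSC V) (L : AbsSC W) (f g : V → W) : Prop :=
  IsSimplicial K L f ∧ IsSimplicial K L g ∧
    ∀ σ ∈ K.faces, σ.image f ∪ σ.image g ∈ L.faces

/-- Two maps are in the same contiguity class: they are connected by a
finite chain of pairwise contiguous simplicial maps. -/
def ContigClass (K : AbsSC V) (L : AbsSC W) : (V → W) → (V → W) → Prop :=
  Relation.ReflTransGen (Contig K L)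

/-- `U` is a categorical subcomplex of `K`: the inclusion is in the
contiguity class of a constant map onto a vertex of `K`. -/
def Categorical (K U : AbsSC V) : Prop :=
  U.faces ⊆ K.faces ∧ ∃ v : V, {v} ∈ K.faces ∧ ContigClass U K id (fun _ => v)

/-- `K` is covered by `n+1` categorical subcomplexes. -/
def CatCover (K : AbsSC V) (n : ℕ) : Prop :=
  ∃ U : Fin (n + 1) → AbsSC V, (∀ i, Categorical K (U i)) ∧
    ∀ σ ∈ K.faces, ∃ i, σ ∈ (U i).faces

/-- The simplicial Lusternik–Schnirelmann category of `K`. -/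
noncomputable def scat (K : AbsSC V) : ℕ := sInf {n | CatCover K n}

/-- A maximal simplex of `K`. -/
def MaximalFace (K : AbsSC V) (σ : Finset V) : Prop :=
  σ ∈ K.faces ∧ ∀ τ ∈ K.faces, σ ⊆ τ → σ = τ

/-- The vertex `v` is dominated (by some other vertex `v'`). -/
def Dominated (K : AbsSC V) (v : V) : Prop :=
  ∃ v' : V, v' ≠ v ∧ {v} ∈ K.faces ∧ {v'} ∈ K.faces ∧
    ∀ σ : Finset V, MaximalFace K σ → v ∈ σ → v' ∈ σ

/-- A minimal complex: no vertex is dominated. -/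
def Minimal (K : AbsSC V) : Prop := ∀ v : V, ¬ Dominated K v

/-- Deleting (the open star of) a vertex. -/
def delete (K : AbsSC V) (v : V) : AbsSC V where
  faces := {σ ∈ K.faces | v ∉ σ}
  nonempty_of_mem := fun σ h => K.nonempty_of_mem σ h.1
  down_closed := fun σ h τ hτ hne =>
    ⟨K.down_closed σ h.1 τ hτ hne, fun hv => h.2 (hτ hv)⟩

/-- An elementary strong collapse: removal of the open star of a dominated vertex. -/
def ElemStrongCollapse (K L : AbsSC V) : Prop :=
  ∃ v : V, Dominated K v ∧ L = K.delete v

/-- A complex consisting of a single vertex. -/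
def IsPoint (K : AbsSC V) : Prop := ∃ v : V, K.faces = {{v}}

/-- `K` is strongly collapsible: it reduces to a single vertex by a
sequence of elementary strong collapses. -/
def StronglyCollapsible (K : AbsSC V) : Prop :=
  ∃ L : AbsSC V, Relation.ReflTransGen ElemStrongCollapse K L ∧ IsPoint L

/-- `K` is covered by `n+1` subcomplexes, each strongly collapsible in itself. -/
def GCatCover (K : AbsSC V) (n : ℕ) : Prop :=
  ∃ U : Fin (n + 1) → AbsSC V,
    (∀ i, (U i).faces ⊆ K.faces ∧ StronglyCollapsible (U i)) ∧
    ∀ σ ∈ K.faces, ∃ i, σ ∈ (U i).faces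

/-- The geometric simplicial category of `K`. -/
noncomputable def gscat (K : AbsSC V) : ℕ := sInf {n | GCatCover K n}

/-- Strong homotopy equivalence of complexes. -/
def StrongEquiv (K : AbsSC V) (L : AbsSC W) : Prop :=
  ∃ (φ : V → W) (ψ : W → V), IsSimplicial K L φ ∧ IsSimplicial L K ψ ∧
    ContigClass K K (ψ ∘ φ) id ∧ ContigClass L L (φ ∘ ψ) id

/-- The barycentric subdivision: vertices are the simplices of `K`,
simplices are the chains of simplices of `K`. -/
def sd (K : AbsSC V) : AbsSC (Finset V) where
  faces := {S | S.Nonempty ∧ (∀ σ ∈ S, σ ∈ K.faces) ∧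
    ∀ σ ∈ S, ∀ τ ∈ S, σ ⊆ τ ∨ τ ⊆ σ}
  nonempty_of_mem := fun S hS => hS.1
  down_closed := fun S hS T hTS hT =>
    ⟨hT, fun σ hσ => hS.2.1 σ (hTS hσ),
      fun σ hσ τ hτ => hS.2.2 σ (hTS hσ) τ (hTS hτ)⟩

/-- The categorical product of simplicial complexes. -/
def prod (K : AbsSC V) (L : AbsSC W) : AbsSC (V × W) where
  faces := {σ | σ.Nonempty ∧ σ.image Prod.fst ∈ K.faces ∧ σ.image Prod.snd ∈ L.faces}
  nonempty_of_mem := fun σ h => h.1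
  down_closed := fun σ h τ hτ hne =>
    ⟨hne, K.down_closed _ h.2.1 _ (Finset.image_subset_image hτ) (hne.image _),
      L.down_closed _ h.2.2 _ (Finset.image_subset_image hτ) (hne.image _)⟩

/-- The `n`-fold categorical power of `K`. -/
def power (K : AbsSC V) (n : ℕ) : AbsSC (Fin n → V) where
  faces := {σ | σ.Nonempty ∧ ∀ j : Fin n, σ.image (fun f => f j) ∈ K.faces}
  nonempty_of_mem := fun σ h => h.1
  down_closed := by
    intro σ h τ hτ hne
    exact ⟨hne, fun j => K.down_closed _ (h.2 j) _ (Finset.image_subset_image hτ) (hne.image _)⟩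

/-- The `n`-th fat wedge of a pointed complex `(K, v₀)` inside `Kⁿ`. -/
def fatWedge (K : AbsSC V) (n : ℕ) (v₀ : V) : AbsSC (Fin n → V) where
  faces := {σ | σ ∈ (K.power n).faces ∧ ∃ j : Fin n, ∀ f ∈ σ, f j = v₀}
  nonempty_of_mem := fun σ h => (K.power n).nonempty_of_mem σ h.1
  down_closed := fun σ h τ hτ hne =>
    ⟨(K.power n).down_closed σ h.1 τ hτ hne,
      h.2.imp fun j hj f hf => hj f (hτ hf)⟩

/-- The part of a set of vertices of a disjoint union lying in the left factor. -/
noncomputable def sumLeft (σ : Finset (V ⊕ W)) : Finset V :=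
  σ.preimage Sum.inl Sum.inl_injective.injOn

/-- The part of a set of vertices of a disjoint union lying in the right factor. -/
noncomputable def sumRight (σ : Finset (V ⊕ W)) : Finset W :=
  σ.preimage Sum.inr Sum.inr_injective.injOn

/-- The simplicial join `K ∗ L`. -/
def join (K : AbsSC V) (L : AbsSC W) : AbsSC (V ⊕ W) where
  faces := {σ | σ.Nonempty ∧ ((sumLeft σ).Nonempty → sumLeft σ ∈ K.faces) ∧
    ((sumRight σ).Nonempty → sumRight σ ∈ L.faces)}
  nonempty_of_mem := fun σ h => h.1
  down_closed := by
    intro σ h τ hτ hne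
    have hl : sumLeft τ ⊆ sumLeft σ := fun x hx => by
      rw [sumLeft, Finset.mem_preimage] at *; exact hτ hx
    have hr : sumRight τ ⊆ sumRight σ := fun x hx => by
      rw [sumRight, Finset.mem_preimage] at *; exact hτ hx
    exact ⟨hne,
      fun h1 => K.down_closed _ (h.2.1 (h1.mono hl)) _ hl h1,
      fun h1 => L.down_closed _ (h.2.2 (h1.mono hr)) _ hr h1⟩

/-- A graph: a simplicial complex of dimension at most 1. -/
def IsGraph (G : AbsSC V) : Prop := ∀ σ ∈ G.faces, σ.card ≤ 2

/-- A connected (nonempty) complex: any two vertices are joined by an edge path. -/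
def ConnectedG (G : AbsSC V) : Prop :=
  G.faces.Nonempty ∧
    ∀ u v : V, {u} ∈ G.faces → {v} ∈ G.faces →
      ∃ (n : ℕ) (p : Fin (n + 1) → V), p 0 = u ∧ p (Fin.last n) = v ∧
        ∀ i : Fin n, ({p i.castSucc, p i.succ} : Finset V) ∈ G.faces

/-- A cycle of length `n` in a graph: `n ≥ 3` distinct vertices joined cyclically by edges. -/
def IsCycle (G : AbsSC V) (n : ℕ) (p : ZMod n → V) : Prop :=
  3 ≤ n ∧ Function.Injective p ∧
    ∀ i : ZMod n, ({p i, p (i + 1)} : Finset V) ∈ G.faces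

/-- A forest: a graph containing no cycle. -/
def IsForest (G : AbsSC V) : Prop := ∀ (n : ℕ) (p : ZMod n → V), ¬ IsCycle G n p

/-- A tree: a connected forest. -/
def IsTree (G : AbsSC V) : Prop := IsForest G ∧ ConnectedG G

/-- A decomposition of a graph into `k` edge-disjoint spanning forests. -/
def EdgeDisjointForestDecomp (G : AbsSC V) (k : ℕ) : Prop :=
  ∃ F : Fin k → AbsSC V,
    (∀ i, (F i).faces ⊆ G.faces ∧ IsForest (F i) ∧
      ∀ v : V, {v} ∈ G.faces → {v} ∈ (F i).faces) ∧
    (∀ σ ∈ G.faces, ∃ i, σ ∈ (F i).faces) ∧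
    ∀ (i j : Fin k) (σ : Finset V), σ.card = 2 →
      σ ∈ (F i).faces → σ ∈ (F j).faces → i = j

/-- The arboricity of a graph. -/
noncomputable def arboricity (G : AbsSC V) : ℕ :=
  sInf {k | EdgeDisjointForestDecomp G k}

end AbsSC

/-! View each forest `Fᵢ` as an acyclic subgraph of the 1-skeleton of `G` and extend it, inside that
1-skeleton, to an acyclic graph `Hᵢ` with the same reachability relation (Mathlib's spanning forest).
As `G` is connected, `Hᵢ` connects all vertices of `G`, so the faces of `G` that are cliques of `Hᵢ`
form a tree; it contains `Fᵢ`, hence these trees still cover `G`. -/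

namespace AbsSC

variable {V : Type}

lemma singleton_mem_faces {K : AbsSC V} {σ : Finset V} (hσ : σ ∈ K.faces) {v : V} (hv : v ∈ σ) :
    ({v} : Finset V) ∈ K.faces :=
  K.down_closed σ hσ {v} (Finset.singleton_subset_iff.2 hv) (Finset.singleton_nonempty v)

def cliqueSubcomplex (K : AbsSC V) (H : SimpleGraph V) : AbsSC V where
  faces := {σ ∈ K.faces | ∀ a ∈ σ, ∀ b ∈ σ, a ≠ b → H.Adj a b}
  nonempty_of_mem σ hσ := K.nonempty_of_mem σ hσ.1
  down_closed σ hσ τ hτσ hτ :=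
    ⟨K.down_closed σ hσ.1 τ hτσ hτ, fun a ha b hb => hσ.2 a (hτσ ha) b (hτσ hb)⟩

variable [DecidableEq V]

def graph (K : AbsSC V) : SimpleGraph V where
  Adj a b := a ≠ b ∧ ({a, b} : Finset V) ∈ K.faces
  symm := ⟨fun a b h => ⟨h.1.symm, Finset.pair_comm a b ▸ h.2⟩⟩
  loopless := ⟨fun _ h => h.1 rfl⟩

@[simp]
lemma graph_adj {K : AbsSC V} {a b : V} : K.graph.Adj a b ↔ a ≠ b ∧ ({a, b} : Finset V) ∈ K.faces :=
  Iff.rfl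

lemma graph_mono {K L : AbsSC V} (h : L.faces ⊆ K.faces) : L.graph ≤ K.graph :=
  fun _ _ hab => ⟨hab.1, h hab.2⟩

lemma isCycle_iff_graph (K : AbsSC V) (n : ℕ) (p : ZMod n → V) :
    IsCycle K n p ↔ 3 ≤ n ∧ Function.Injective p ∧ ∀ i, K.graph.Adj (p i) (p (i + 1)) := by
  refine and_congr_right fun hn => and_congr_right fun hp => forall_congr' fun i => ?_
  obtain ⟨m, rfl⟩ : ∃ m, n = m + 2 := ⟨n - 2, by omega⟩
  have : Fact (1 < m + 2) := ⟨by omega⟩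
  exact ⟨fun h => ⟨fun he => by simpa using hp he, h⟩, And.right⟩

theorem isForest_iff_isAcyclic (K : AbsSC V) : IsForest K ↔ K.graph.IsAcyclic := by
  rw [SimpleGraph.isAcyclic_iff_free_cycleGraph]
  -- `ZMod (m + 2)` is `Fin (m + 2)` by definition, so cycles are literally copies of `cycleGraph`.
  refine ⟨fun hK n hn ⟨f⟩ => ?_, fun hK n p hp => ?_⟩
  · obtain ⟨m, rfl⟩ : ∃ m, n = m + 2 := ⟨n - 2, by omega⟩
    refine hK (m + 2) f ((isCycle_iff_graph K _ _).2 ⟨hn, f.injective, fun i => ?_⟩)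
    exact f.toHom.map_adj (Or.inr (add_sub_cancel_left i 1))
  · obtain ⟨hn, hinj, hadj⟩ := (isCycle_iff_graph K n p).1 hp
    obtain ⟨m, rfl⟩ : ∃ m, n = m + 2 := ⟨n - 2, by omega⟩
    refine hK (m + 2) hn ⟨⟨⟨p, fun {a b} hab => ?_⟩, hinj⟩⟩
    rcases hab with hab | hab
    · rw [sub_eq_iff_eq_add'] at hab
      exact hab ▸ (hadj b).symm
    · rw [sub_eq_iff_eq_add'] at hab
      exact hab ▸ hadj a

lemma reachable_of_pair_mem {K : AbsSC V} {a b : V} (h : ({a, b} : Finset V) ∈ K.faces) :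
    K.graph.Reachable a b := by
  by_cases hab : a = b
  · exact hab ▸ SimpleGraph.Reachable.refl a
  · exact (graph_adj.2 ⟨hab, h⟩).reachable

lemma reachable_of_path {K : AbsSC V} {n : ℕ} (p : Fin (n + 1) → V)
    (hp : ∀ i : Fin n, ({p i.castSucc, p i.succ} : Finset V) ∈ K.faces) :
    K.graph.Reachable (p 0) (p (Fin.last n)) := by
  induction Fin.last n using Fin.induction with
  | zero => rfl
  | succ i ih => exact ih.trans (reachable_of_pair_mem (hp i))

lemma exists_path_of_reachable {K : AbsSC V} {u v : V} (h : K.graph.Reachable u v) :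
    ∃ (n : ℕ) (p : Fin (n + 1) → V), p 0 = u ∧ p (Fin.last n) = v ∧
      ∀ i : Fin n, ({p i.castSucc, p i.succ} : Finset V) ∈ K.faces := by
  obtain ⟨w⟩ := h
  refine ⟨w.length, fun i => w.getVert i, by simp, by simp, fun i => ?_⟩
  simpa using (w.adj_getVert_succ i.isLt).2

theorem connectedG_iff (K : AbsSC V) :
    ConnectedG K ↔ K.faces.Nonempty ∧
      ∀ u v : V, {u} ∈ K.faces → {v} ∈ K.faces → K.graph.Reachable u v := by
  refine and_congr_right fun _ => forall₄_congr fun u v _ _ => ⟨?_, exists_path_of_reachable⟩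
  rintro ⟨n, p, rfl, rfl, hp⟩
  exact reachable_of_path p hp

lemma graph_cliqueSubcomplex {K : AbsSC V} {H : SimpleGraph V} (hH : H ≤ K.graph) :
    (K.cliqueSubcomplex H).graph = H := by
  ext a b
  refine ⟨fun h => h.2.2 a (by simp) b (by simp) h.1, fun h => ⟨h.ne, (hH h).2, ?_⟩⟩
  simp only [Finset.mem_insert, Finset.mem_singleton]
  rintro x (rfl | rfl) y (rfl | rfl) hxy <;> first | exact absurd rfl hxy | exact h | exact h.symm

lemma faces_subset_cliqueSubcomplex {K L : AbsSC V} {H : SimpleGraph V}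
    (hLK : L.faces ⊆ K.faces) (hLH : L.graph ≤ H) : L.faces ⊆ (K.cliqueSubcomplex H).faces := by
  refine fun σ hσ => ⟨hLK hσ, fun a ha b hb hab => hLH ⟨hab, ?_⟩⟩
  refine L.down_closed σ hσ {a, b} ?_ (Finset.insert_nonempty a {b})
  simp [Finset.insert_subset_iff, ha, hb]

theorem isTree_cliqueSubcomplex {K : AbsSC V} (hK : ConnectedG K) {H : SimpleGraph V}
    (hHK : H ≤ K.graph) (hH : H.IsAcyclic) (hreach : H.Reachable = K.graph.Reachable) :
    IsTree (K.cliqueSubcomplex H) := by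
  have hgraph := graph_cliqueSubcomplex hHK
  rw [connectedG_iff] at hK
  obtain ⟨⟨σ, hσ⟩, hKreach⟩ := hK
  obtain ⟨w, hw⟩ := K.nonempty_of_mem σ hσ
  refine ⟨(isForest_iff_isAcyclic _).2 (by rwa [hgraph]), (connectedG_iff _).2 ⟨?_, ?_⟩⟩
  · exact ⟨{w}, singleton_mem_faces hσ hw, by simp⟩
  · intro u v hu hv
    rw [hgraph, hreach]
    exact hKreach u v hu.1 hv.1

end AbsSC

theorem forest_cover_to_tree_cover_general {V : Type} [DecidableEq V]
    (G : AbsSC V) (hconn : AbsSC.ConnectedG G)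
    (k : ℕ) (F : Fin k → AbsSC V) (hsub : ∀ i, (F i).faces ⊆ G.faces)
    (hforest : ∀ i, AbsSC.IsForest (F i))
    (hcover : ∀ σ ∈ G.faces, ∃ i, σ ∈ (F i).faces) :
    ∃ T : Fin k → AbsSC V,
      (∀ i, (T i).faces ⊆ G.faces ∧ AbsSC.IsTree (T i)) ∧
      ∀ σ ∈ G.faces, ∃ i, σ ∈ (T i).faces := by
  choose H hFH hHG hH hreach using fun i =>
    G.graph.exists_isAcyclic_reachable_eq_le_of_le_of_isAcyclic (AbsSC.graph_mono (hsub i))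
      ((AbsSC.isForest_iff_isAcyclic (F i)).1 (hforest i))
  refine ⟨fun i => G.cliqueSubcomplex (H i), fun i => ⟨fun _ hσ => hσ.1,
    AbsSC.isTree_cliqueSubcomplex hconn (hHG i) (hH i) (hreach i)⟩, fun σ hσ => ?_⟩
  obtain ⟨i, hi⟩ := hcover σ hσ
  exact ⟨i, AbsSC.faces_subset_cliqueSubcomplex (hsub i) (hFH i) hi⟩

/-- any cover of a connected graph by `k` forests can be
upgraded to a cover by `k` trees. -/
theorem forest_cover_to_tree_cover {V : Type} [DecidableEq V] [Fintype V]
    (G : AbsSC V) (hG : AbsSC.IsGraph G) (hconn : AbsSC.ConnectedG G)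
    (k : ℕ) (F : Fin k → AbsSC V) (hsub : ∀ i, (F i).faces ⊆ G.faces)
    (hforest : ∀ i, AbsSC.IsForest (F i))
    (hcover : ∀ σ ∈ G.faces, ∃ i, σ ∈ (F i).faces) :
    ∃ T : Fin k → AbsSC V,
      (∀ i, (T i).faces ⊆ G.faces ∧ AbsSC.IsTree (T i)) ∧
      ∀ σ ∈ G.faces, ∃ i, σ ∈ (T i).faces :=
  forest_cover_to_tree_cover_general G hconn k F hsub hforest hcover
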